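/- Let I : ℕ → ℕ be a sequence of positive integers, and let T : ℕ → ℕ be the concatenated sequence which on the k-th block of length I(k) takes values 0, 1, ..., I(k)-1. Suppose the Cesàro limits lim_{m→∞} (1/m) ∑_{k=1}^m I(k) = μ₁ > 0 and lim_{m→∞} (1/m) ∑_{k=1}^m I(k)² = μ₂ exist (as real numbers). Then lim_{M→∞} (1/M) ∑_{t=1}^M T(t) = (μ₂/μ₁ - 1)/2. -/

import Mathlib

/-!
Cut time at the service epochs `S m = I 0 + ⋯ + I (m - 1)`. A block of length `I k`
contributes `0 + 1 + ⋯ + (I k - 1) = (I k ^ 2 - I k) / 2` to the running sum, so along the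
epochs the sum grows like `m (μ₂ - μ₁) / 2` while time grows like `m μ₁`. Since the running sum
is monotone, squeezing an arbitrary time `M` between two consecutive epochs transfers the ratio
`(μ₂ - μ₁) / (2 μ₁)` from the epochs to all times.
-/

open Finset Filter Topology

theorem Finset.sum_range_natCast_eq {K : Type*} [Field K] [CharZero K] (n : ℕ) :
    ∑ i ∈ range n, (i : K) = ((n : K) ^ 2 - n) / 2 := by
  induction n with
  | zero => simp
  | succ n ih => rw [sum_range_succ, ih]; push_cast; field_simp; ring

theorem Finset.sum_range_eq_sum_sum_Ico {M : Type*} [AddCommMonoid M] (f : ℕ → M)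
    {S : ℕ → ℕ} (hS : Monotone S) (hS0 : S 0 = 0) (m : ℕ) :
    ∑ t ∈ range (S m), f t = ∑ k ∈ range m, ∑ t ∈ Ico (S k) (S (k + 1)), f t := by
  induction m with
  | zero => simp [hS0]
  | succ m ih => rw [sum_range_succ, ← ih, sum_range_add_sum_Ico _ (hS m.le_succ)]

theorem Finset.sum_Ico_eq_sum_range_of_eq_sub {R : Type*} [AddCommMonoidWithOne R]
    {T : ℕ → ℕ} {a b : ℕ} (hT : ∀ t, a ≤ t → t < b → T t = t - a) :
    ∑ t ∈ Ico a b, (T t : R) = ∑ i ∈ range (b - a), (i : R) := by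
  rw [sum_Ico_eq_sum_range]
  refine sum_congr rfl fun i hi => ?_
  rw [mem_range] at hi
  rw [hT (a + i) (Nat.le_add_right a i) (by omega), Nat.add_sub_cancel_left]

theorem StrictMono.exists_le_lt_succ {S : ℕ → ℕ} (hS : StrictMono S) (hS0 : S 0 = 0) (M : ℕ) :
    ∃ n, S n ≤ M ∧ M < S (n + 1) := by
  induction M with
  | zero => exact ⟨0, hS0.le, hS0.symm.trans_lt (hS zero_lt_one)⟩
  | succ M ih =>
    obtain ⟨n, hle, hlt⟩ := ih
    rcases (Nat.succ_le_of_lt hlt).lt_or_eq with h | h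
    · exact ⟨n, by omega, h⟩
    · exact ⟨n + 1, h.ge, h.trans_lt (hS (n + 1).lt_succ_self)⟩

theorem Filter.Tendsto.apply_succ_div_natCast {u : ℕ → ℝ} {c : ℝ}
    (h : Tendsto (fun m => u m / m) atTop (𝓝 c)) :
    Tendsto (fun m => u (m + 1) / m) atTop (𝓝 c) := by
  have hshift : Tendsto (fun m : ℕ => u (m + 1) / ((m : ℝ) + 1)) atTop (𝓝 c) := by
    simpa [Function.comp_def] using h.comp (tendsto_add_atTop_nat 1)
  have := hshift.div (tendsto_natCast_div_add_atTop (1 : ℝ)) one_ne_zero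
  rw [div_one] at this
  exact this.congr fun m => div_div_div_cancel_right₀ m.cast_add_one_ne_zero _ _

theorem tendsto_div_of_tendsto_comp_div {F : ℕ → ℝ} (hF : Monotone F) (hF0 : 0 ≤ F 0)
    {S : ℕ → ℕ} (hS : StrictMono S) (hS0 : S 0 = 0) {a b : ℝ} (hb : 0 < b)
    (hFS : Tendsto (fun m => F (S m) / m) atTop (𝓝 a))
    (hSm : Tendsto (fun m => (S m : ℝ) / m) atTop (𝓝 b)) :
    Tendsto (fun M => F M / M) atTop (𝓝 (a / b)) := by
  choose n hn using hS.exists_le_lt_succ hS0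
  have hn_tendsto : Tendsto n atTop atTop := tendsto_atTop_atTop.2 fun K =>
    ⟨S K, fun M hM => Nat.lt_succ_iff.1 (hS.lt_iff_lt.1 (hM.trans_lt (hn M).2))⟩
  have hlower : Tendsto (fun k => F (S k) / S (k + 1)) atTop (𝓝 (a / b)) :=
    (hFS.div hSm.apply_succ_div_natCast hb.ne').congr' <| (eventually_ne_atTop 0).mono
      fun k hk => div_div_div_cancel_right₀ (Nat.cast_ne_zero.2 hk) _ _
  have hupper : Tendsto (fun k => F (S (k + 1)) / S k) atTop (𝓝 (a / b)) :=
    (hFS.apply_succ_div_natCast.div hSm hb.ne').congr' <| (eventually_ne_atTop 0).mono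
      fun k hk => div_div_div_cancel_right₀ (Nat.cast_ne_zero.2 hk) _ _
  have hF_nonneg : ∀ t, 0 ≤ F t := fun t => hF0.trans (hF t.zero_le)
  refine tendsto_of_tendsto_of_tendsto_of_le_of_le' (hlower.comp hn_tendsto)
    (hupper.comp hn_tendsto) ?_ ?_ <;>
    filter_upwards [eventually_ge_atTop (S 1)] with M hM <;>
    obtain ⟨hle, hlt⟩ := hn M
  · have hM_pos : (0 : ℝ) < M := by
      exact_mod_cast (hS0.symm.trans_lt (hS zero_lt_one)).trans_le hM
    calc F (S (n M)) / S (n M + 1) ≤ F (S (n M)) / M :=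
          div_le_div_of_nonneg_left (hF_nonneg _) hM_pos (by exact_mod_cast hlt.le)
      _ ≤ F M / M := div_le_div_of_nonneg_right (hF hle) hM_pos.le
  · have hn_pos : 0 < n M := Nat.lt_succ_iff.1 (hS.lt_iff_lt.1 (hM.trans_lt hlt))
    have hSn_pos : (0 : ℝ) < S (n M) := by exact_mod_cast hS0 ▸ hS hn_pos
    calc F M / M ≤ F (S (n M + 1)) / M := div_le_div_of_nonneg_right (hF hlt.le) (M.cast_nonneg)
      _ ≤ F (S (n M + 1)) / S (n M) :=
          div_le_div_of_nonneg_left (hF_nonneg _) hSn_pos (by exact_mod_cast hle)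

/-- Deterministic Cesàro-average version of Lemma 1: if the inter-service times `I k`
have Cesàro means `μ₁ > 0` and Cesàro second moments `μ₂`, then the time average of
the concatenated TSLS counter converges to `(μ₂/μ₁ - 1)/2`. -/
theorem stmt_2 (I : ℕ → ℕ) (hI : ∀ k, 0 < I k) (T : ℕ → ℕ)
    (S : ℕ → ℕ) (hS : ∀ m, S m = ∑ k ∈ Finset.range m, I k)
    (hT : ∀ k, ∀ t, S k ≤ t → t < S (k + 1) → T t = t - S k)
    (μ₁ μ₂ : ℝ) (hμ₁pos : 0 < μ₁)
    (h1 : Tendsto (fun m : ℕ => (∑ k ∈ Finset.range m, (I k : ℝ)) / m) atTop (nhds μ₁))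
    (h2 : Tendsto (fun m : ℕ => (∑ k ∈ Finset.range m, (I k : ℝ) ^ 2) / m) atTop (nhds μ₂)) :
    Tendsto (fun M : ℕ => (∑ t ∈ Finset.range M, (T t : ℝ)) / M) atTop
      (nhds ((μ₂ / μ₁ - 1) / 2)) := by
  have hS0 : S 0 = 0 := by simp [hS]
  have hS_succ : ∀ k, S (k + 1) = S k + I k := fun k => by simp [hS, sum_range_succ]
  have hS_mono : StrictMono S :=
    strictMono_nat_of_lt_succ fun k => hS_succ k ▸ Nat.lt_add_of_pos_right (hI k)
  have hblocks : ∀ m, ∑ t ∈ range (S m), (T t : ℝ) = ∑ k ∈ range m, ((I k : ℝ) ^ 2 - I k) / 2 :=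
    fun m => by
      rw [sum_range_eq_sum_sum_Ico _ hS_mono.monotone hS0]
      refine sum_congr rfl fun k _ => ?_
      rw [sum_Ico_eq_sum_range_of_eq_sub (hT k), hS_succ, Nat.add_sub_cancel_left,
        sum_range_natCast_eq]
  have hF_mono : Monotone fun M => ∑ t ∈ range M, (T t : ℝ) :=
    fun _ _ h => sum_le_sum_of_subset_of_nonneg (range_mono h) fun _ _ _ => by positivity
  have hFS : Tendsto (fun m => (∑ t ∈ range (S m), (T t : ℝ)) / m) atTop
      (𝓝 ((μ₂ - μ₁) / 2)) :=
    ((h2.sub h1).div_const 2).congr fun m => by rw [hblocks, ← sum_div, sum_sub_distrib]; ring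
  have hSm : Tendsto (fun m => (S m : ℝ) / m) atTop (𝓝 μ₁) := by simpa [hS] using h1
  convert tendsto_div_of_tendsto_comp_div hF_mono (by simp) hS_mono hS0 hμ₁pos hFS hSm using 2
  field_simp
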